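/- arXiv:2206.07009 — 7 statements merged into one kernel-verified Lean document; each statement's English description precedes it below -/
import Mathlib

section
/- F-Match has no false positives when exactly one element is missing: let x : Fin m → ZMod q, Y a Finset of ZMod q, and r : Fin m → (ZMod q)ˣ arbitrary unit randomizers. If there is an index i₀ with x i₀ ∉ Y while x i ∈ Y for every i ≠ i₀, then the F-Match response ∑_{i} (r i) · ∏_{y ∈ Y} (x i − y) is nonzero. -/
/-- F-Match has no false positives when exactly one client element is
missing from the server set: the response is then nonzero. -/
theorem fmatch_one_missing_sound (q : ℕ) [Fact (Nat.Prime q)]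
    (m : ℕ) (x : Fin m → ZMod q) (Y : Finset (ZMod q))
    (r : Fin m → (ZMod q)ˣ)
    (i₀ : Fin m) (h₀ : x i₀ ∉ Y) (h : ∀ i, i ≠ i₀ → x i ∈ Y) :
    ∑ i, (r i : ZMod q) * ∏ y ∈ Y, (x i - y) ≠ 0 := by
  have hsum : ∑ i, (r i : ZMod q) * ∏ y ∈ Y, (x i - y)
      = (r i₀ : ZMod q) * ∏ y ∈ Y, (x i₀ - y) := by
    apply Finset.sum_eq_single
    · intro i _ hi
      have : ∏ y ∈ Y, (x i - y) = 0 :=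
        Finset.prod_eq_zero (h i hi) (by simp)
      simp [this]
    · intro hi; exact absurd (Finset.mem_univ i₀) hi
  rw [hsum]
  apply mul_ne_zero (Units.ne_zero _)
  apply Finset.prod_ne_zero_iff.mpr
  intro y hy
  intro hzero
  exact h₀ (by rwa [sub_eq_zero.mp hzero])
end

section
/- False-positive bound for randomized sums: let n ≥ 1 and c : Fin n → ZMod q be coefficients with c i₀ ≠ 0 for at least one index i₀. Then the number of tuples of unit randomizers r : Fin n → (ZMod q)ˣ for which ∑_{i} (r i) · c i = 0 is at most (q − 1)^(n−1). Equivalently, when the r i are drawn independently and uniformly from (ZMod q)ˣ, the probability that the randomized sum equals 0 is at most 1/(q − 1). -/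
/-- False-positive bound for randomized sums: if some coefficient `c i₀` is
nonzero, then the number of tuples of unit randomizers `r` making
`∑ i, r i * c i = 0` is at most `(q - 1)^(n - 1)`; equivalently, the
false-positive probability is at most `1 / (q - 1)`. -/
theorem randomized_sum_false_positive_bound (q : ℕ) [Fact (Nat.Prime q)]
    (n : ℕ) (hn : 1 ≤ n) (c : Fin n → ZMod q) (i₀ : Fin n) (hc : c i₀ ≠ 0) :
    (Finset.univ.filter
        (fun r : Fin n → (ZMod q)ˣ => ∑ i, (r i : ZMod q) * c i = 0)).card ≤
      (q - 1) ^ (n - 1) := by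
  classical
  have hcard : (Finset.univ : Finset ({i : Fin n // i ≠ i₀} → (ZMod q)ˣ)).card
      = (q - 1) ^ (n - 1) := by
    have hs : Fintype.card {i : Fin n // i ≠ i₀} = n - 1 := by
      simp [Fintype.card_subtype_compl]
    rw [Finset.card_univ, Fintype.card_fun, ZMod.card_units_eq_totient,
      Nat.totient_prime (Fact.out (p := q.Prime)), hs]
  rw [← hcard]
  apply Finset.card_le_card_of_injOn (fun r => fun i => r i.1)
  · intro r _; exact Finset.mem_univ _
  · intro r hr r' hr' h
    simp only [Finset.mem_coe, Finset.mem_filter] at hr hr'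
    have hne : ∀ i : Fin n, i ≠ i₀ → r i = r' i := by
      intro i hi
      exact congrFun h ⟨i, hi⟩
    have hsum : (r i₀ : ZMod q) * c i₀ + ∑ i ∈ Finset.univ.erase i₀, (r i : ZMod q) * c i
        = (r' i₀ : ZMod q) * c i₀ + ∑ i ∈ Finset.univ.erase i₀, (r' i : ZMod q) * c i := by
      have e1 := Finset.add_sum_erase Finset.univ (fun i => (r i : ZMod q) * c i)
        (Finset.mem_univ i₀)
      have e2 := Finset.add_sum_erase Finset.univ (fun i => (r' i : ZMod q) * c i)
        (Finset.mem_univ i₀)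
      rw [e1, e2, hr.2, hr'.2]
    have hsum2 : ∑ i ∈ Finset.univ.erase i₀, (r i : ZMod q) * c i
        = ∑ i ∈ Finset.univ.erase i₀, (r' i : ZMod q) * c i := by
      apply Finset.sum_congr rfl
      intro i hi
      rw [hne i (Finset.ne_of_mem_erase hi)]
    have h0 : (r i₀ : ZMod q) * c i₀ = (r' i₀ : ZMod q) * c i₀ := by
      rw [hsum2] at hsum
      exact add_right_cancel hsum
    have h1 : (r i₀ : ZMod q) = (r' i₀ : ZMod q) :=
      mul_right_cancel₀ hc h0
    funext i
    by_cases hi : i = i₀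
    · subst hi; exact Units.ext h1
    · exact hne i hi
end

section
/- Correctness of retrieval aggregation: let N be a natural number, b : Fin N → ℕ with b j ≤ 1 for all j, κ ≥ 1 a natural number, and D : Fin N → R associated data in a commutative ring R. If some index j* satisfies b j* = 1 and ∑_{i ≤ j*} b i = κ, then j* is the unique such index, and ∑_{j} D j · (if b j · (∑_{i ≤ j} b i) = κ then 1 else 0) = D j*. -/
open Finset

lemma count_strict_mono {N : ℕ} (b : Fin N → ℕ) {j j' : Fin N}
    (h : j < j') (hb' : b j' = 1) :
    ∑ i ∈ Finset.Iic j, b i < ∑ i ∈ Finset.Iic j', b i := by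
  have hsub : insert j' (Finset.Iic j) ⊆ Finset.Iic j' := by
    intro x hx
    simp only [Finset.mem_insert, Finset.mem_Iic] at hx ⊢
    rcases hx with rfl | hx
    · exact le_refl _
    · exact le_trans hx h.le
  have hnot : j' ∉ Finset.Iic j := by
    simp [Finset.mem_Iic, not_le, h]
  calc ∑ i ∈ Finset.Iic j, b i < b j' + ∑ i ∈ Finset.Iic j, b i := by omega
    _ = ∑ i ∈ insert j' (Finset.Iic j), b i := (Finset.sum_insert hnot).symm
    _ ≤ ∑ i ∈ Finset.Iic j', b i := Finset.sum_le_sum_of_subset hsub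

/-- Correctness of retrieval aggregation: if `j*` is an index with
`b j* = 1` and running count `∑_{i ≤ j*} b i = κ`, then `j*` is the unique
such index and the weighted sum of associated data against the retrieval
indicators equals `D j*`. -/
theorem retrieval_aggregation_correct {R : Type*} [CommRing R]
    (N : ℕ) (b : Fin N → ℕ) (hb : ∀ j, b j ≤ 1) (κ : ℕ) (hκ : 1 ≤ κ)
    (D : Fin N → R) (jstar : Fin N)
    (hbj : b jstar = 1) (hsum : ∑ i ∈ Finset.Iic jstar, b i = κ) :
    (∀ j : Fin N, b j = 1 ∧ ∑ i ∈ Finset.Iic j, b i = κ → j = jstar) ∧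
    ∑ j, D j * (if b j * (∑ i ∈ Finset.Iic j, b i) = κ then (1 : R) else 0) = D jstar := by
  have huniq : ∀ j : Fin N, b j = 1 ∧ ∑ i ∈ Finset.Iic j, b i = κ → j = jstar := by
    intro j ⟨hbj', hsum'⟩
    by_contra hne
    rcases lt_or_gt_of_ne hne with h | h
    · have := count_strict_mono b h hbj
      omega
    · have := count_strict_mono b h hbj'
      omega
  refine ⟨huniq, ?_⟩
  rw [Finset.sum_eq_single jstar]
  · rw [hbj, one_mul, if_pos hsum, mul_one]
  · intro j _ hne
    have : ¬ (b j * (∑ i ∈ Finset.Iic j, b i) = κ) := by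
      intro hcontra
      have hbj1 : b j = 1 := by
        have := hb j
        interval_cases h : b j
        · simp [h] at hcontra; omega
        · rfl
      exact hne (huniq j ⟨hbj1, by rwa [hbj1, one_mul] at hcontra⟩)
    rw [if_neg this, mul_zero]
  · intro h; exact absurd (Finset.mem_univ jstar) h
end

section
/- Recurrence for the probability that a sum of uniform units hits a nonzero target: for every integer k ≥ 2 and every nonzero a ∈ ZMod q, N k a = N (k−1) 0 + (q − 2) · N (k−1) a. Equivalently, writing z⁽ᵏ⁾ and p⁽ᵏ⁾ for the probabilities that the sum of k independent uniform elements of (ZMod q)ˣ equals 0 and equals a respectively, p⁽ᵏ⁾ = p⁽ᵏ⁻¹⁾ + (z⁽ᵏ⁻¹⁾ − p⁽ᵏ⁻¹⁾)/(q − 1). -/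
/-!
Splitting off the first coordinate `u` gives `N (k+1) a = ∑ᵤ N k (a - u)`. Multiplying every
coordinate by a fixed unit shows that `N k` takes one value on all nonzero targets, and `a - u`
vanishes for exactly one unit `u` and is nonzero for the remaining `q - 2`.
-/

/-- Number of tuples of `k` units of `ZMod q` whose sum equals `s`. -/
def unitSumCount (q : ℕ) [Fact (Nat.Prime q)] (k : ℕ) (s : ZMod q) : ℕ :=
  (Finset.univ.filter (fun r : Fin k → (ZMod q)ˣ => ∑ i, ((r i : ZMod q)) = s)).card

section

variable {q : ℕ} [Fact (Nat.Prime q)] {k : ℕ}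

theorem unitSumCount_succ (s : ZMod q) :
    unitSumCount q (k + 1) s = ∑ u : (ZMod q)ˣ, unitSumCount q k (s - u) := by
  classical
  simp only [unitSumCount, Finset.card_filter]
  rw [← (Fin.consEquiv fun _ => (ZMod q)ˣ).sum_comp, Fintype.sum_prod_type]
  simp [Fin.sum_univ_succ, eq_sub_iff_add_eq']

theorem unitSumCount_units_mul (c : (ZMod q)ˣ) (s : ZMod q) :
    unitSumCount q k (c * s) = unitSumCount q k s := by
  refine Finset.card_nbij' (fun r i => c⁻¹ * r i) (fun r i => c * r i) ?_ ?_ ?_ ?_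
  · intro r hr
    simp only [Finset.coe_filter, Finset.mem_univ, true_and, Set.mem_ofPred_eq] at hr ⊢
    simp only [Units.val_mul, ← Finset.mul_sum, hr, Units.inv_mul_cancel_left]
  · intro r hr
    simp only [Finset.coe_filter, Finset.mem_univ, true_and, Set.mem_ofPred_eq] at hr ⊢
    simp only [Units.val_mul, ← Finset.mul_sum, hr]
  · intro r _
    simp
  · intro r _
    simp

theorem unitSumCount_eq_of_ne_zero {s t : ZMod q} (hs : s ≠ 0) (ht : t ≠ 0) :
    unitSumCount q k s = unitSumCount q k t := by
  simpa [hs] using (unitSumCount_units_mul (k := k) (Units.mk0 t ht * (Units.mk0 s hs)⁻¹) s).symm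

end

/-- Recurrence for the probability that a sum of uniform units hits a
nonzero target: for `k ≥ 2` and nonzero `a`,
`N k a = N (k-1) 0 + (q - 2) · N (k-1) a`. -/
theorem unitSumCount_nonzero_rec (q : ℕ) [Fact (Nat.Prime q)] (k : ℕ) (hk : 2 ≤ k)
    (a : ZMod q) (ha : a ≠ 0) :
    unitSumCount q k a = unitSumCount q (k - 1) 0 + (q - 2) * unitSumCount q (k - 1) a := by
  classical
  obtain ⟨m, rfl⟩ : ∃ m, k = m + 1 := ⟨k - 1, by omega⟩
  let ua := Units.mk0 a ha
  have hsum : ∀ u ∈ Finset.univ.erase ua, unitSumCount q m (a - u) = unitSumCount q m a := by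
    intro u hu
    refine unitSumCount_eq_of_ne_zero (sub_ne_zero.mpr fun h => ?_) ha
    exact (Finset.mem_erase.mp hu).1 (Units.ext h.symm)
  have hcard : (Finset.univ.erase ua).card = q - 2 := by
    rw [Finset.card_erase_of_mem (Finset.mem_univ _), Finset.card_univ, ZMod.card_units]
    omega
  rw [Nat.add_sub_cancel, unitSumCount_succ, ← Finset.add_sum_erase _ _ (Finset.mem_univ ua),
    Finset.sum_congr rfl hsum, Finset.sum_const, hcard, smul_eq_mul]
  simp [ua]
end

section
/- Closed form for the counting gap: for every integer k ≥ 1 and every nonzero a ∈ ZMod q, the (integer) difference satisfies N k a − N k 0 = (−1)^(k−1). In particular N 1 0 = 0 and N 1 a = 1, and for every k the counts of tuples of units summing to a nonzero value and to zero differ by exactly one. -/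
open Finset

section Ring

variable (R : Type*) [Ring R] [Fintype R] [DecidableEq R]

def unitsSumCount (k : ℕ) (s : R) : ℕ :=
  #{r : Fin k → Rˣ | ∑ i, (r i : R) = s}

variable {R}

theorem unitsSumCount_zero_length (s : R) :
    unitsSumCount R 0 s = if s = 0 then 1 else 0 := by
  by_cases hs : s = 0 <;> simp [unitsSumCount, hs, eq_comm]

theorem unitsSumCount_succ (k : ℕ) (s : R) :
    unitsSumCount R (k + 1) s = ∑ u : Rˣ, unitsSumCount R k (s - u) := by
  simp only [unitsSumCount, card_filter]
  rw [← (Fin.consEquiv fun _ => Rˣ).sum_comp, Fintype.sum_prod_type]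
  simp [Fin.sum_univ_succ, eq_sub_iff_add_eq']

theorem unitsSumCount_units_mul (c : Rˣ) (k : ℕ) (s : R) :
    unitsSumCount R k (c * s) = unitsSumCount R k s := by
  symm
  refine card_nbij' (fun r i => c * r i) (fun r i => c⁻¹ * r i) ?_ ?_ ?_ ?_ <;> intro r <;>
    simp +contextual [← Finset.mul_sum]

end Ring

section DivisionRing

variable {K : Type*} [DivisionRing K] [Fintype K] [DecidableEq K]

theorem unitsSumCount_eq_of_ne_zero (k : ℕ) {s t : K} (hs : s ≠ 0) (ht : t ≠ 0) :
    unitsSumCount K k s = unitsSumCount K k t := by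
  rw [← unitsSumCount_units_mul (Units.mk0 (t * s⁻¹) (by simp [hs, ht])) k s]
  simp [hs]

theorem unitsSumCount_sub_unitsSumCount_zero (k : ℕ) {a : K} (ha : a ≠ 0) :
    (unitsSumCount K k a : ℤ) - unitsSumCount K k 0 = -(-1) ^ k := by
  induction k generalizing a with
  | zero => simp [unitsSumCount_zero_length, ha]
  | succ k ih =>
    simp only [unitsSumCount_succ, Nat.cast_sum, ← sum_sub_distrib]
    rw [sum_eq_single (Units.mk0 a ha)]
    · rw [Units.val_mk0, sub_self, zero_sub, unitsSumCount_eq_of_ne_zero k (neg_ne_zero.2 ha) ha]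
      linear_combination -ih ha
    · intro u _ hu
      have hau : a - u ≠ 0 := sub_ne_zero.2 fun h => hu (Units.ext h.symm)
      rw [unitsSumCount_eq_of_ne_zero k hau (neg_ne_zero.2 u.ne_zero), zero_sub, sub_self]
    · simp

end DivisionRing

theorem unitSumCount_eq_unitsSumCount (q : ℕ) [Fact (Nat.Prime q)] (k : ℕ) (s : ZMod q) :
    unitSumCount q k s = unitsSumCount (ZMod q) k s :=
  rfl

/-- Closed form for the counting gap: for `k ≥ 1` and nonzero `a`,
`N k a - N k 0 = (-1)^(k-1)` (as integers). -/
theorem unitSumCount_gap_closed_form (q : ℕ) [Fact (Nat.Prime q)] (k : ℕ) (hk : 1 ≤ k)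
    (a : ZMod q) (ha : a ≠ 0) :
    (unitSumCount q k a : ℤ) - (unitSumCount q k 0 : ℤ) = (-1) ^ (k - 1) := by
  obtain ⟨n, rfl⟩ := Nat.exists_eq_add_of_le' hk
  rw [unitSumCount_eq_unitsSumCount, unitSumCount_eq_unitsSumCount,
    unitsSumCount_sub_unitsSumCount_zero (n + 1) ha, Nat.add_sub_cancel, pow_succ]
  ring
end

section
/- Bound on the probability that a sum of uniform units is zero: for every integer k ≥ 2, N k 0 ≤ (q − 1)^(k−1), i.e., the probability that the sum of k independent uniform elements of (ZMod q)ˣ equals 0 is at most 1/(q − 1); moreover this bound is attained at k = 2, where N 2 0 = q − 1, i.e., the probability that the sum of two independent uniform units is zero is exactly 1/(q − 1). -/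
lemma unitSumCount_le (q : ℕ) [Fact (Nat.Prime q)] (m : ℕ) (s : ZMod q) :
    unitSumCount q (m + 1) s ≤ (q - 1) ^ m := by
  classical
  have hcard : Fintype.card (ZMod q)ˣ = q - 1 := ZMod.card_units q
  unfold unitSumCount
  calc (Finset.univ.filter
        (fun r : Fin (m+1) → (ZMod q)ˣ => ∑ i, ((r i : ZMod q)) = s)).card
      ≤ (Finset.univ : Finset (Fin m → (ZMod q)ˣ)).card := by
        apply Finset.card_le_card_of_injOn (fun r => r ∘ Fin.castSucc)
        · intro r _; exact Finset.mem_univ _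
        · intro r hr r' hr' h
          simp only [Finset.coe_filter, Finset.mem_univ, Set.mem_setOf_eq, true_and] at hr hr'
          have hrest : ∀ i : Fin m, r i.castSucc = r' i.castSucc := fun i =>
            congrFun h i
          have hsum : (∑ i : Fin m, ((r i.castSucc : ZMod q)))
              = ∑ i : Fin m, ((r' i.castSucc : ZMod q)) := by
            exact Finset.sum_congr rfl (fun i _ => by rw [hrest i])
          rw [Fin.sum_univ_castSucc] at hr hr'
          have hlast : (r (Fin.last m) : ZMod q) = r' (Fin.last m) := by
            have := hr.trans hr'.symm
            rw [hsum] at this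
            exact add_left_cancel this
          funext i
          rcases Fin.eq_castSucc_or_eq_last i with ⟨j, rfl⟩ | rfl
          · exact hrest j
          · exact Units.ext hlast
    _ = (q - 1) ^ m := by
        simp [Finset.card_univ, Fintype.card_fun, hcard]

lemma unitSumCount_two (q : ℕ) [Fact (Nat.Prime q)] :
    unitSumCount q 2 0 = q - 1 := by
  classical
  have hcard : Fintype.card (ZMod q)ˣ = q - 1 := ZMod.card_units q
  unfold unitSumCount
  rw [← hcard, ← Finset.card_univ]
  apply Finset.card_bij (fun r _ => r 0)
  · intro r _; exact Finset.mem_univ _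
  · intro r hr r' hr' h
    simp only [Finset.mem_filter, Finset.mem_univ, true_and, Fin.sum_univ_two] at hr hr'
    funext i
    fin_cases i
    · exact h
    · apply Units.ext
      show (r 1 : ZMod q) = r' 1
      have h1 : (r 1 : ZMod q) = -(r 0) := by linear_combination hr
      have h2 : (r' 1 : ZMod q) = -(r' 0) := by linear_combination hr'
      rw [h1, h2, h]
  · intro u _
    refine ⟨![u, -u], ?_, rfl⟩
    simp [Fin.sum_univ_two]

/-- Bound on the probability that a sum of uniform units is zero: for
`k ≥ 2`, `N k 0 ≤ (q - 1)^(k-1)` (probability at most `1/(q-1)`), and the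
bound is attained at `k = 2`: `N 2 0 = q - 1`. -/
theorem unitSumCount_zero_bound (q : ℕ) [Fact (Nat.Prime q)] (k : ℕ) (hk : 2 ≤ k) :
    unitSumCount q k 0 ≤ (q - 1) ^ (k - 1) ∧ unitSumCount q 2 0 = q - 1 := by
  obtain ⟨m, rfl⟩ : ∃ m, k = m + 1 := ⟨k - 1, by omega⟩
  exact ⟨by simpa using unitSumCount_le q m 0, unitSumCount_two q⟩
end

section
/- Near-uniformity of the sum of uniform units: for every integer k ≥ 2 and every nonzero a ∈ ZMod q, the difference between the probability that the sum of k independent uniform elements of (ZMod q)ˣ equals a and the probability that it equals 0 is bounded in absolute value by 1/(q − 1)²; i.e., |N k a / (q−1)^k − N k 0 / (q−1)^k| ≤ 1/(q − 1)² (as rational numbers). -/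
/-!
Deleting the last coordinate identifies the `(k+1)`-tuples of units with sum `s` with the
`k`-tuples whose sum is not `s`: the last coordinate is forced to be `s` minus their sum, which
is a unit exactly when it is nonzero. Hence `N (k+1) s = (q-1)^k - N k s`, so the difference
`N k a - N k 0` changes sign at each step; it is `-1` at `k = 0`, and the two probabilities
differ by exactly `1/(q-1)^k`.
-/

open Finset

section

variable (F : Type*) [DivisionRing F] [Fintype F] [DecidableEq F]

def unitTupleSumCount (k : ℕ) (s : F) : ℕ :=
  #{r : Fin k → Fˣ | ∑ i, (r i : F) = s}

variable {F}

theorem unitTupleSumCount_succ (k : ℕ) (s : F) :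
    unitTupleSumCount F (k + 1) s = #{r : Fin k → Fˣ | ∑ i, (r i : F) ≠ s} := by
  rw [unitTupleSumCount, ← Fintype.card_subtype, ← Fintype.card_subtype]
  refine Fintype.card_congr
    { toFun := fun r => ⟨Fin.init r.1, fun h => ?_⟩
      invFun := fun r => ⟨Fin.snoc r.1 (Units.mk0 _ (sub_ne_zero.2 (Ne.symm r.2))), ?_⟩
      left_inv := fun r => ?_
      right_inv := fun r => ?_ }
  · have hsum := r.2
    rw [Fin.sum_univ_castSucc] at hsum
    exact (r.1 (Fin.last k)).ne_zero (by simp_all [Fin.init])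
  · simp [Fin.sum_univ_castSucc]
  · have hsum := r.2
    rw [Fin.sum_univ_castSucc] at hsum
    ext1
    conv_rhs => rw [← Fin.snoc_init_self r.1]
    ext
    simp [Fin.init, ← hsum]
  · simp

theorem unitTupleSumCount_succ_add (k : ℕ) (s : F) :
    unitTupleSumCount F (k + 1) s + unitTupleSumCount F k s = Fintype.card Fˣ ^ k := by
  rw [unitTupleSumCount_succ, unitTupleSumCount, add_comm, card_filter_add_card_filter_not]
  simp

theorem unitTupleSumCount_sub_unitTupleSumCount_zero {s : F} (hs : s ≠ 0) (k : ℕ) :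
    (unitTupleSumCount F k s : ℤ) - unitTupleSumCount F k 0 = (-1) ^ (k + 1) := by
  induction k with
  | zero => simp [unitTupleSumCount, hs.symm]
  | succ k ih =>
    have hsucc_s := unitTupleSumCount_succ_add k s
    have hsucc_zero := unitTupleSumCount_succ_add k (0 : F)
    rw [pow_succ, ← ih]
    push_cast [← hsucc_zero] at hsucc_s
    linarith

end

/-- Near-uniformity of the sum of uniform units: for `k ≥ 2` and nonzero
`a`, the difference between the probabilities of hitting `a` and of hitting
`0` is at most `1/(q-1)²` in absolute value. -/
theorem unitSum_near_uniform (q : ℕ) [Fact (Nat.Prime q)] (k : ℕ) (hk : 2 ≤ k)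
    (a : ZMod q) (ha : a ≠ 0) :
    |(unitSumCount q k a : ℚ) / ((q : ℚ) - 1) ^ k -
        (unitSumCount q k 0 : ℚ) / ((q : ℚ) - 1) ^ k| ≤
      1 / ((q : ℚ) - 1) ^ 2 := by
  have hdiff : (unitSumCount q k a : ℚ) - unitSumCount q k 0 = (-1) ^ (k + 1) := by
    exact_mod_cast unitTupleSumCount_sub_unitTupleSumCount_zero ha k
  have hq : (1 : ℚ) ≤ q - 1 := by
    have : (2 : ℚ) ≤ q := by exact_mod_cast (Fact.out : q.Prime).two_le
    linarith
  rw [← sub_div, hdiff, abs_div, abs_pow, abs_neg, abs_one, one_pow,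
    abs_of_pos (by positivity)]
  exact one_div_le_one_div_of_le (by positivity) (pow_le_pow_right₀ hq hk)
end
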